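/- Let G be a simple graph on n vertices with a partition (V_1, …, V_k) of its vertex set, and let H be the graph obtained from G as follows: add all edges inside each V_i (turning each V_i into a clique); for each i, add two new vertices x_i and y_i, each adjacent exactly to all vertices of V_i; and add a new vertex z adjacent exactly to all vertices of V(G). If H contains a set F of at least 3k + 1 vertices such that H[F] is acyclic (equivalently, H has a feedback vertex set of size at most n − k), then G contains an independent set with exactly one vertex from each V_i. -/

import Mathlib

/-- The graph `H` built from `G` with vertex partition `P : Fin k → Set V`: each part `P i` is
turned into a clique, two new vertices `x_i = Sum.inr (Sum.inl (i, false))` and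
`y_i = Sum.inr (Sum.inl (i, true))` are each adjacent exactly to the vertices of `P i`, and a
new vertex `z = Sum.inr (Sum.inr ())` is adjacent exactly to all vertices of `G`. -/
def Hgraph {V : Type*} (G : SimpleGraph V) {k : ℕ} (P : Fin k → Set V) :
    SimpleGraph (V ⊕ ((Fin k × Bool) ⊕ Unit)) :=
  SimpleGraph.fromRel fun a b =>
    match a, b with
    | Sum.inl u, Sum.inl v => G.Adj u v ∨ ∃ i, u ∈ P i ∧ v ∈ P i
    | Sum.inl u, Sum.inr (Sum.inl (i, _)) => u ∈ P i
    | Sum.inl _, Sum.inr (Sum.inr _) => True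
    | _, _ => False

/-!
Since `H[F]` is a forest it has no triangle. Each part `Vᵢ` is a clique whose vertices are all
adjacent to `xᵢ` and `yᵢ`, so `F` meets the block `Vᵢ ∪ {xᵢ, yᵢ}` in at most three vertices,
and in exactly three only if it meets `Vᵢ` in a single vertex `vᵢ`. The blocks and `z` cover
`H`, so `|F| ≥ 3k + 1` forces `z ∈ F` and a single vertex `vᵢ ∈ F` in every part. Two of the
`vᵢ` adjacent in `G` would form a triangle with `z`.
-/

namespace SimpleGraph

variable {W : Type*} {H : SimpleGraph W} {F C : Set W}

theorem CliqueFree.not_adj_of_induce (hF : (H.induce F).CliqueFree 3) {a b c : W}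
    (ha : a ∈ F) (hb : b ∈ F) (hc : c ∈ F) (hab : H.Adj a b) (hac : H.Adj a c) :
    ¬ H.Adj b c := by
  classical
  exact fun hbc => hF _ ((is3Clique_triple_iff (G := H.induce F) (a := ⟨a, ha⟩)
    (b := ⟨b, hb⟩) (c := ⟨c, hc⟩)).2 ⟨hab, hac, hbc⟩)

theorem IsClique.ncard_inter_le_two (hF : (H.induce F).CliqueFree 3) (hC : H.IsClique C) :
    (F ∩ C).ncard ≤ 2 := by
  by_contra! h
  obtain ⟨a, ha, b, hb, c, hc, hab, hac, hbc⟩ :=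
    (Set.two_lt_ncard (Set.finite_of_ncard_pos (by omega))).1 h
  exact hF.not_adj_of_induce ha.1 hb.1 hc.1 (hC ha.2 hb.2 hab) (hC ha.2 hc.2 hac)
    (hC hb.2 hc.2 hbc)

theorem IsClique.notMem_of_forall_adj (hF : (H.induce F).CliqueFree 3) (hC : H.IsClique C)
    (h2 : (F ∩ C).ncard = 2) {x : W} (hx : ∀ c ∈ C, H.Adj c x) : x ∉ F := by
  intro hxF
  obtain ⟨a, b, hab, hFC⟩ := Set.ncard_eq_two.1 h2
  have ha : a ∈ F ∩ C := hFC ▸ Set.mem_insert a {b}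
  have hb : b ∈ F ∩ C := hFC ▸ Set.mem_insert_of_mem a rfl
  exact hF.not_adj_of_induce ha.1 hb.1 hxF (hC ha.2 hb.2 hab) (hx a ha.2) (hx b hb.2)

theorem IsClique.ncard_inter_union_pair_le (hF : (H.induce F).CliqueFree 3)
    (hC : H.IsClique C) {x y : W} (hx : ∀ c ∈ C, H.Adj c x) (hy : ∀ c ∈ C, H.Adj c y) :
    (F ∩ (C ∪ {x, y})).ncard ≤ 3 ∧
      ((F ∩ (C ∪ {x, y})).ncard = 3 → (F ∩ C).ncard = 1) := by
  have hunion : (F ∩ (C ∪ {x, y})).ncard ≤ (F ∩ C).ncard + (F ∩ {x, y}).ncard := by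
    rw [Set.inter_union_distrib_left]
    exact Set.ncard_union_le _ _
  have hpair : (F ∩ {x, y}).ncard ≤ 2 :=
    (Set.ncard_le_ncard Set.inter_subset_right).trans
      ((Set.ncard_insert_le x {y}).trans_eq (by rw [Set.ncard_singleton]))
  have hC2 := hC.ncard_inter_le_two hF
  by_cases h2 : (F ∩ C).ncard = 2
  · have hxy : F ∩ {x, y} = ∅ := by
      ext w
      simp only [Set.mem_inter_iff, Set.mem_insert_iff, Set.mem_singleton_iff,
        Set.mem_empty_iff_false, iff_false, not_and]
      rintro hw (rfl | rfl)
      exacts [hC.notMem_of_forall_adj hF h2 hx hw, hC.notMem_of_forall_adj hF h2 hy hw]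
    rw [hxy, Set.ncard_empty] at hunion
    omega
  · omega

end SimpleGraph

open SimpleGraph

section Hgraph

variable {V : Type*} {G : SimpleGraph V} {k : ℕ} {P : Fin k → Set V}
  {F : Set (V ⊕ ((Fin k × Bool) ⊕ Unit))}

theorem Hgraph_adj_inl_of_adj {u v : V} (h : G.Adj u v) :
    (Hgraph G P).Adj (Sum.inl u) (Sum.inl v) := by
  rw [Hgraph, fromRel_adj]
  exact ⟨by simpa using h.ne, Or.inl (Or.inl h)⟩

theorem Hgraph_isClique_image_part (i : Fin k) : (Hgraph G P).IsClique (Sum.inl '' P i) := by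
  rintro _ ⟨u, hu, rfl⟩ _ ⟨v, hv, rfl⟩ hne
  rw [Hgraph, fromRel_adj]
  exact ⟨hne, Or.inl (Or.inr ⟨i, hu, hv⟩)⟩

theorem Hgraph_adj_inl_inr_inl {i : Fin k} {u : V} (b : Bool) (hu : u ∈ P i) :
    (Hgraph G P).Adj (Sum.inl u) (Sum.inr (Sum.inl (i, b))) := by
  rw [Hgraph, fromRel_adj]
  exact ⟨by simp, Or.inl hu⟩

theorem Hgraph_adj_inl_inr_inr (u : V) : (Hgraph G P).Adj (Sum.inl u) (Sum.inr (Sum.inr ())) := by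
  rw [Hgraph, fromRel_adj]
  exact ⟨by simp, Or.inl trivial⟩

def partBlock (P : Fin k → Set V) (i : Fin k) : Set (V ⊕ ((Fin k × Bool) ⊕ Unit)) :=
  Sum.inl '' P i ∪ {Sum.inr (Sum.inl (i, false)), Sum.inr (Sum.inl (i, true))}

theorem ncard_inter_partBlock_le (hF : ((Hgraph G P).induce F).CliqueFree 3) (i : Fin k) :
    (F ∩ partBlock P i).ncard ≤ 3 ∧
      ((F ∩ partBlock P i).ncard = 3 → ∃ v, ∀ u, u ∈ P i ∧ Sum.inl u ∈ F ↔ u = v) := by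
  obtain ⟨hle, heq⟩ := (Hgraph_isClique_image_part (G := G) i).ncard_inter_union_pair_le hF
    (by rintro _ ⟨u, hu, rfl⟩; exact Hgraph_adj_inl_inr_inl false hu)
    (by rintro _ ⟨u, hu, rfl⟩; exact Hgraph_adj_inl_inr_inl true hu)
  refine ⟨hle, fun h3 => ?_⟩
  obtain ⟨w, hw⟩ := Set.ncard_eq_one.1 (heq h3)
  obtain ⟨v, -, rfl⟩ := (hw ▸ Set.mem_singleton w : w ∈ F ∩ Sum.inl '' P i).2
  refine ⟨v, fun u => ?_⟩
  simpa [and_comm] using Set.ext_iff.1 hw (Sum.inl u)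

theorem ncard_le_ncard_inter_add_sum_ncard_inter_partBlock (hcov : (⋃ i, P i) = Set.univ)
    (F : Set (V ⊕ ((Fin k × Bool) ⊕ Unit))) :
    F.ncard ≤ (F ∩ {Sum.inr (Sum.inr ())}).ncard + ∑ i, (F ∩ partBlock P i).ncard := by
  have hcover : {Sum.inr (Sum.inr ())} ∪ ⋃ i, partBlock P i = Set.univ := by
    refine Set.eq_univ_of_forall fun w => ?_
    rcases w with v | ⟨i, b⟩ | ⟨⟩
    · obtain ⟨i, hi⟩ := Set.mem_iUnion.1 (hcov ▸ Set.mem_univ v)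
      exact Or.inr (Set.mem_iUnion.2 ⟨i, Or.inl ⟨v, hi, rfl⟩⟩)
    · exact Or.inr (Set.mem_iUnion.2 ⟨i, Or.inr (by cases b <;> simp)⟩)
    · exact Or.inl rfl
  calc F.ncard = ((F ∩ {Sum.inr (Sum.inr ())}) ∪ ⋃ i, F ∩ partBlock P i).ncard := by
        rw [← Set.inter_iUnion, ← Set.inter_union_distrib_left, hcover, Set.inter_univ]
    _ ≤ _ := (Set.ncard_union_le _ _).trans
      (Nat.add_le_add_left (Set.ncard_iUnion_le_of_fintype _) _)

theorem pairwise_not_adj_range_of_Hgraph (hF : ((Hgraph G P).induce F).CliqueFree 3)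
    (hz : Sum.inr (Sum.inr ()) ∈ F) {v : Fin k → V} (hvF : ∀ i, Sum.inl (v i) ∈ F) :
    (Set.range v).Pairwise fun u w => ¬ G.Adj u w := by
  rintro _ ⟨i, rfl⟩ _ ⟨j, rfl⟩ - hadj
  exact hF.not_adj_of_induce (hvF i) (hvF j) hz (Hgraph_adj_inl_of_adj hadj)
    (Hgraph_adj_inl_inr_inr _) (Hgraph_adj_inl_inr_inr _)

theorem existsUnique_mem_range_inter_part {v : Fin k → V}
    (hv : ∀ i u, u ∈ P i ∧ Sum.inl u ∈ F ↔ u = v i) (i : Fin k) :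
    ∃! u, u ∈ Set.range v ∧ u ∈ P i := by
  refine ⟨v i, ⟨⟨i, rfl⟩, ((hv i _).2 rfl).1⟩, ?_⟩
  rintro _ ⟨⟨j, rfl⟩, hj⟩
  exact (hv i _).1 ⟨hj, ((hv j _).2 rfl).2⟩

end Hgraph

theorem stmt11_general {V : Type*} (G : SimpleGraph V) {k : ℕ} (P : Fin k → Set V)
    (hcov : (⋃ i, P i) = Set.univ)
    (F : Set (V ⊕ ((Fin k × Bool) ⊕ Unit)))
    (hcard : 3 * k + 1 ≤ F.ncard)
    (hacyc : ((Hgraph G P).induce F).IsAcyclic) :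
    ∃ I : Set V, (I.Pairwise fun u v => ¬ G.Adj u v) ∧ ∀ i, ∃! v, v ∈ I ∧ v ∈ P i := by
  have hF : ((Hgraph G P).induce F).CliqueFree 3 := hacyc.cliqueFree le_rfl
  have hblock := ncard_inter_partBlock_le hF
  have hcount := ncard_le_ncard_inter_add_sum_ncard_inter_partBlock hcov F
  have hz1 : (F ∩ {Sum.inr (Sum.inr ())}).ncard ≤ 1 :=
    (Set.ncard_le_ncard Set.inter_subset_right).trans_eq (Set.ncard_singleton _)
  have h3k : ∑ _i : Fin k, 3 = 3 * k := by simp [mul_comm]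
  have hsum_le : ∑ i, (F ∩ partBlock P i).ncard ≤ ∑ _i : Fin k, 3 :=
    Finset.sum_le_sum fun i _ => (hblock i).1
  have hz : Sum.inr (Sum.inr ()) ∈ F := by
    by_contra hz
    rw [Set.inter_singleton_eq_empty.2 hz, Set.ncard_empty] at hcount
    omega
  have hfull : ∀ i, (F ∩ partBlock P i).ncard = 3 := fun i =>
    (Finset.sum_eq_sum_iff_of_le fun i _ => (hblock i).1).1 (by omega) i (Finset.mem_univ i)
  choose v hv using fun i => (hblock i).2 (hfull i)
  refine ⟨Set.range v, pairwise_not_adj_range_of_Hgraph hF hz fun i => ((hv i _).2 rfl).2,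
    existsUnique_mem_range_inter_part hv⟩

/-- If `H` (built from `G` with vertex partition `(P 1, …, P k)`) contains a
set `F` of at least `3k + 1` vertices inducing an acyclic subgraph, then `G` contains an
independent set with exactly one vertex from each part `P i`. -/
theorem stmt11 {V : Type*} [Fintype V] (G : SimpleGraph V) {k : ℕ} (P : Fin k → Set V)
    (hcov : (⋃ i, P i) = Set.univ)
    (hdisj : ∀ i j, i ≠ j → Disjoint (P i) (P j))
    (F : Set (V ⊕ ((Fin k × Bool) ⊕ Unit)))
    (hcard : 3 * k + 1 ≤ F.ncard)
    (hacyc : ((Hgraph G P).induce F).IsAcyclic) :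
    ∃ I : Set V, (I.Pairwise fun u v => ¬ G.Adj u v) ∧ ∀ i, ∃! v, v ∈ I ∧ v ∈ P i :=
  stmt11_general G P hcov F hcard hacyc
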